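/- Let χ' : 𝔽_qˣ → kˣ be a character and let χ be the restriction of χ'∘det to H, so that χ^s = χ and T_{n_s} maps Ind_B^Γ χ to itself. Then Ind_B^Γ χ is the internal direct sum of the k[Γ]-submodules Im(T_{n_s}) and Im(1 + T_{n_s}); Im(1 + T_{n_s}) is the one-dimensional subspace spanned by the function g ↦ χ'(det g), on which Γ acts through the character χ'∘det; consequently Im(T_{n_s}) has dimension q. Moreover Im(T_{n_s} : Ind_B^Γ χ → Ind_B^Γ χ) is isomorphic as a k[Γ]-module to St ⊗ (χ'∘det), where St = Im(T_{n_s} : Ind_B^Γ 𝟙 → Ind_B^Γ 𝟙) for the trivial character 𝟙. -/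

import Mathlib

/-!
By the Bruhat decomposition `Γ = B ⊔ B n_s⁻¹ U`, a function in `Ind_B^Γ (χ' ∘ det)` is determined
by its values at `1` and at the `n_s⁻¹ u_c`, and these values are arbitrary, so the induced module
has dimension `q + 1`. Evaluating `T = T_{n_s}` at these points gives
`f + T f = (f 1 + ∑_c f (n_s⁻¹ u_c)) · (χ' ∘ det)`, while `T (χ' ∘ det) = q · (χ' ∘ det) = 0`
in characteristic `p`. Hence `T² = -T`, so `-T` and `1 + T` are complementary projections of the
induced module, the second onto the line through `χ' ∘ det`, and `dim Im T = (q + 1) - 1`.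
Multiplication by `χ'⁻¹ ∘ det` commutes with `T`, carries `Ind_B^Γ (χ' ∘ det)` onto `Ind_B^Γ 𝟙`
and twists the action of `Γ` by `χ' ∘ det`.
-/

open Matrix

noncomputable section

abbrev GL2 (F : Type) [Field F] := Matrix.GeneralLinearGroup (Fin 2) F

variable (F : Type) [Field F] [Fintype F] (k : Type) [Field k]

/-- The unipotent upper-triangular matrix `[[1, c], [0, 1]]`. -/
def uElt (c : F) : GL2 F :=
  Matrix.GeneralLinearGroup.mkOfDetNeZero !![1, c; 0, 1] (by simp [Matrix.det_fin_two_of])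

/-- The upper-triangular matrix `[[a, c], [0, d]]`. -/
def bElt (a d : Fˣ) (c : F) : GL2 F :=
  Matrix.GeneralLinearGroup.mkOfDetNeZero !![(a : F), c; 0, (d : F)]
    (by simp [Matrix.det_fin_two_of])

/-- The diagonal matrix `[[a, 0], [0, d]]`. -/
def hElt (a d : Fˣ) : GL2 F := bElt F a d 0

/-- The matrix `n_s = [[0, -1], [1, 0]]`. -/
def nsElt : GL2 F :=
  Matrix.GeneralLinearGroup.mkOfDetNeZero !![0, -1; 1, 0] (by norm_num [Matrix.det_fin_two_of])

/-- The right-translation representation of `GL₂(F)` on the space of `k`-valued functions. -/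
def rt : Representation k (GL2 F) (GL2 F → k) where
  toFun g :=
    { toFun := fun f x => f (x * g)
      map_add' := fun _ _ => rfl
      map_smul' := fun _ _ => rfl }
  map_one' := by ext f x; simp
  map_mul' g g' := by ext f x; simp [mul_assoc]

/-- `χ^s`, the character obtained from `χ` by swapping the two diagonal entries. -/
def swapChar (χ : (Fˣ × Fˣ) →* kˣ) : (Fˣ × Fˣ) →* kˣ where
  toFun x := χ (x.2, x.1)
  map_one' := χ.map_one
  map_mul' x y := by rw [← _root_.map_mul]; rfl

/-- The induced representation `Ind_B^Γ χ` as a subspace of the space of functions `Γ → k`: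
functions satisfying `f (b * g) = χ (b) * f g` for all upper-triangular `b`. -/
def Ind (χ : (Fˣ × Fˣ) →* kˣ) : Submodule k (GL2 F → k) where
  carrier := {f | ∀ (a d : Fˣ) (c : F) (g : GL2 F), f (bElt F a d c * g) = (χ (a, d) : k) * f g}
  add_mem' := by
    intro f1 f2 h1 h2 a d c g
    simp only [Pi.add_apply, h1 a d c g, h2 a d c g]
    ring
  zero_mem' := by intro a d c g; simp
  smul_mem' := by
    intro t f hf a d c g
    simp only [Pi.smul_apply, smul_eq_mul, hf a d c g]
    ring

/-- The Hecke operator `T_{n_s}`, `(T f) x = ∑_{c ∈ F} f (n_s⁻¹ * u_c * x)`. -/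
def heckeT : (GL2 F → k) →ₗ[k] (GL2 F → k) where
  toFun f x := ∑ c : F, f ((nsElt F)⁻¹ * uElt F c * x)
  map_add' f g := by funext x; simp [Finset.sum_add_distrib]
  map_smul' t f := by funext x; simp [Finset.mul_sum]

/-- The submodule of invariants of a representation under a set of group elements. -/
def invSubmodule {G V : Type*} [Group G] [AddCommGroup V] [Module k V]
    (ρ : Representation k G V) (S : Set G) : Submodule k V where
  carrier := {v | ∀ g ∈ S, ρ g v = v}
  add_mem' := by intro v w hv hw g hg; rw [map_add, hv g hg, hw g hg]
  zero_mem' := by intro g hg; rw [map_zero]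
  smul_mem' := by intro c v hv g hg; rw [LinearMap.map_smul, hv g hg]



end

def wElt (F : Type) [Field F] : GL2 F :=
  Matrix.GeneralLinearGroup.mkOfDetNeZero !![0, 1; -1, 0] (by norm_num [Matrix.det_fin_two_of])

section Matrices

variable {F : Type} [Field F]

@[simp]
lemma coe_uElt (c : F) : (uElt F c : Matrix (Fin 2) (Fin 2) F) = !![1, c; 0, 1] := rfl

@[simp]
lemma coe_bElt (a d : Fˣ) (c : F) :
    (bElt F a d c : Matrix (Fin 2) (Fin 2) F) = !![(a : F), c; 0, (d : F)] := rfl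

@[simp]
lemma coe_wElt : (wElt F : Matrix (Fin 2) (Fin 2) F) = !![0, 1; -1, 0] := rfl

lemma nsElt_inv : (nsElt F)⁻¹ = wElt F := by
  refine inv_eq_of_mul_eq_one_right (Units.ext ?_)
  simp [nsElt, Matrix.one_fin_two]

lemma uElt_mul_uElt (a b : F) : uElt F a * uElt F b = uElt F (a + b) := by
  ext i j; fin_cases i <;> fin_cases j <;> simp [add_comm]

lemma uElt_eq_bElt (c : F) : uElt F c = bElt F 1 1 c := by
  ext i j; fin_cases i <;> fin_cases j <;> simp

lemma uElt_zero : uElt F 0 = 1 := by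
  ext i j; fin_cases i <;> fin_cases j <;> simp

lemma det_bElt (a d : Fˣ) (c : F) : Matrix.GeneralLinearGroup.det (bElt F a d c) = a * d := by
  ext; simp [Matrix.det_fin_two_of]

lemma det_wElt_mul_uElt (c : F) :
    Matrix.GeneralLinearGroup.det (wElt F * uElt F c) = 1 := by
  ext; simp [Matrix.det_fin_two_of]

lemma wElt_mul_uElt_mul_bElt (c : F) (a d : Fˣ) (e : F) :
    wElt F * uElt F c * bElt F a d e = bElt F d a 0 * (wElt F * uElt F ((e + c * d) / a)) := by
  ext i j
  fin_cases i <;> fin_cases j <;> simp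
  field_simp
  ring

lemma wElt_mul_uElt_mul_wElt (c : Fˣ) :
    wElt F * uElt F c * wElt F = bElt F (-c⁻¹) (-c) 1 * (wElt F * uElt F (-c⁻¹ : Fˣ)) := by
  ext i j
  fin_cases i <;> fin_cases j <;> simp

lemma wElt_mul_wElt : wElt F * wElt F = bElt F (-1) (-1) 0 := by
  ext i j
  fin_cases i <;> fin_cases j <;> simp

lemma eq_bElt_or_eq_bElt_mul_wElt_mul_uElt (x : GL2 F) :
    (∃ a d e, x = bElt F a d e) ∨ ∃ a d e m, x = bElt F a d e * (wElt F * uElt F m) := by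
  have hdet := Matrix.GeneralLinearGroup.det_ne_zero x
  rw [Matrix.det_fin_two] at hdet
  by_cases h : (x : Matrix (Fin 2) (Fin 2) F) 1 0 = 0
  · rw [h, mul_zero, sub_zero] at hdet
    refine .inl ⟨Units.mk0 _ (left_ne_zero_of_mul hdet), Units.mk0 _ (right_ne_zero_of_mul hdet),
      (x : Matrix (Fin 2) (Fin 2) F) 0 1, ?_⟩
    ext i j
    fin_cases i <;> fin_cases j <;> simp [h]
  · refine .inr ⟨Units.mk0 _ (div_ne_zero (neg_ne_zero.mpr hdet) h),
      Units.mk0 _ (neg_ne_zero.mpr h), -(x : Matrix (Fin 2) (Fin 2) F) 0 0,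
      (x : Matrix (Fin 2) (Fin 2) F) 1 1 / (x : Matrix (Fin 2) (Fin 2) F) 1 0, ?_⟩
    ext i j
    fin_cases i <;> fin_cases j <;> simp
    · field_simp
      ring
    · field_simp

end Matrices

section Induced

variable {F : Type} [Field F] {k : Type} [Field k] {χ : (Fˣ × Fˣ) →* kˣ} {f g : GL2 F → k}

lemma apply_bElt_of_mem_Ind (hf : f ∈ Ind F k χ) (a d : Fˣ) (e : F) :
    f (bElt F a d e) = χ (a, d) * f 1 := by
  simpa using hf a d e 1

lemma Ind_ext (hf : f ∈ Ind F k χ) (hg : g ∈ Ind F k χ) (h1 : f 1 = g 1)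
    (hw : ∀ c, f (wElt F * uElt F c) = g (wElt F * uElt F c)) : f = g := by
  funext x
  rcases eq_bElt_or_eq_bElt_mul_wElt_mul_uElt x with ⟨a, d, e, rfl⟩ | ⟨a, d, e, m, rfl⟩
  · rw [apply_bElt_of_mem_Ind hf, apply_bElt_of_mem_Ind hg, h1]
  · rw [hf, hg, hw]

end Induced

section Hecke

variable {F : Type} [Field F] [Fintype F] {k : Type} [Field k]

lemma heckeT_apply (f : GL2 F → k) (x : GL2 F) :
    heckeT F k f x = ∑ c : F, f (wElt F * uElt F c * x) := by
  simp [heckeT, nsElt_inv]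

lemma heckeT_mem_Ind {χ : (Fˣ × Fˣ) →* kˣ} {f : GL2 F → k} (hf : f ∈ Ind F k χ) :
    heckeT F k f ∈ Ind F k (swapChar F k χ) := by
  intro a d e g
  have hbij : Function.Bijective fun c : F => (e + c * d) / a :=
    Finite.injective_iff_bijective.mp fun c c' h => by
      simpa [div_left_inj' a.ne_zero, d.ne_zero] using h
  have key : ∀ c, f (wElt F * uElt F c * (bElt F a d e * g)) =
      χ (d, a) * f (wElt F * uElt F ((e + c * d) / a) * g) := by
    intro c
    rw [← mul_assoc, wElt_mul_uElt_mul_bElt, mul_assoc, hf]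
  rw [heckeT_apply, heckeT_apply, Finset.sum_congr rfl fun c _ => key c, ← Finset.mul_sum]
  congr 1
  exact Fintype.sum_bijective _ hbij _ _ fun _ => rfl

end Hecke

section DetChar

variable {F : Type} [Field F] {k : Type} [Field k] (ψ : Fˣ →* kˣ)

def detChar (g : GL2 F) : k := ψ (Matrix.GeneralLinearGroup.det g)

lemma detChar_mul (x y : GL2 F) : detChar ψ (x * y) = detChar ψ x * detChar ψ y := by
  simp [detChar]

@[simp]
lemma detChar_one : detChar ψ (1 : GL2 F) = 1 := by
  simp [detChar]

lemma detChar_ne_zero : detChar ψ ≠ (0 : GL2 F → k) :=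
  fun h => by simpa using congrFun h 1

@[simp]
lemma detChar_wElt_mul_uElt (c : F) : detChar ψ (wElt F * uElt F c) = 1 := by
  simp [detChar, det_wElt_mul_uElt]

lemma detChar_wElt_mul_uElt_mul (c : F) (x : GL2 F) :
    detChar ψ (wElt F * uElt F c * x) = detChar ψ x := by
  rw [detChar_mul, detChar_wElt_mul_uElt, one_mul]

lemma detChar_bElt (a d : Fˣ) (e : F) : detChar ψ (bElt F a d e) = ψ (a * d) := by
  simp [detChar, det_bElt]

lemma swapChar_comp_mulMonoidHom :
    swapChar F k (ψ.comp mulMonoidHom) = ψ.comp mulMonoidHom := by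
  ext x
  simp [swapChar, mul_comm]

lemma detChar_mem_Ind : detChar ψ ∈ Ind F k (ψ.comp mulMonoidHom) := by
  intro a d e g
  simp [detChar_mul, detChar_bElt]

lemma rt_detChar (g : GL2 F) :
    rt F k g (detChar ψ) = (ψ (Matrix.GeneralLinearGroup.det g) : k) • detChar ψ := by
  funext x
  simp [rt, mul_comm, detChar]

lemma rt_detChar_mul (g : GL2 F) (f : GL2 F → k) :
    rt F k g (detChar ψ * f) =
      (ψ (Matrix.GeneralLinearGroup.det g) : k) • (detChar ψ * rt F k g f) := by
  funext x
  simp [rt, detChar]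
  ring

lemma detChar_mul_mem_Ind {χ : (Fˣ × Fˣ) →* kˣ} {f : GL2 F → k} (hf : f ∈ Ind F k χ) :
    detChar ψ * f ∈ Ind F k (χ * ψ.comp mulMonoidHom) := by
  intro a d e g
  rw [Pi.mul_apply, Pi.mul_apply, hf, detChar_mul, detChar_bElt]
  simp
  ring

lemma detChar_mul_detChar_inv_mul (f : GL2 F → k) : detChar ψ * (detChar ψ⁻¹ * f) = f := by
  funext x
  simp [detChar]

lemma mulLeft_detChar_injective :
    Function.Injective (LinearMap.mulLeft k (detChar ψ : GL2 F → k)) :=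
  fun _ _ h => funext fun x => mul_left_cancel₀ (ψ _).ne_zero (congrFun h x)

lemma map_mulLeft_detChar_Ind (χ : (Fˣ × Fˣ) →* kˣ) :
    (Ind F k χ).map (LinearMap.mulLeft k (detChar ψ)) = Ind F k (χ * ψ.comp mulMonoidHom) := by
  refine le_antisymm ?_ fun f hf => ⟨detChar ψ⁻¹ * f, ?_, detChar_mul_detChar_inv_mul ψ f⟩
  · rintro _ ⟨f, hf, rfl⟩
    exact detChar_mul_mem_Ind ψ hf
  · have hχ : χ * ψ.comp mulMonoidHom * ψ⁻¹.comp mulMonoidHom = χ := by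
      rw [MonoidHom.inv_comp]
      exact mul_inv_cancel_right (G := (Fˣ × Fˣ) →* kˣ) _ _
    rw [SetLike.mem_coe, ← hχ]
    exact detChar_mul_mem_Ind ψ⁻¹ hf

variable [Fintype F]

lemma heckeT_mem_Ind_comp_mulMonoidHom {f : GL2 F → k} (hf : f ∈ Ind F k (ψ.comp mulMonoidHom)) :
    heckeT F k f ∈ Ind F k (ψ.comp mulMonoidHom) :=
  swapChar_comp_mulMonoidHom ψ ▸ heckeT_mem_Ind hf

lemma heckeT_detChar : heckeT F k (detChar ψ) = (Fintype.card F : k) • detChar ψ := by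
  funext x
  simp [heckeT_apply, detChar_wElt_mul_uElt_mul]

lemma heckeT_comp_mulLeft_detChar :
    (heckeT F k).comp (LinearMap.mulLeft k (detChar ψ)) =
      (LinearMap.mulLeft k (detChar ψ)).comp (heckeT F k) := by
  ext f x
  simp [heckeT_apply, detChar_wElt_mul_uElt_mul, Finset.mul_sum]

end DetChar

section Projection

variable {R M : Type*} [Ring R] [AddCommGroup M] [Module R M] {V : Submodule R M}
  {T : M →ₗ[R] M}

lemma Submodule.map_sup_map_id_add_eq (hT : V.map T ≤ V) :
    V.map T ⊔ V.map (LinearMap.id + T) = V := by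
  refine le_antisymm (sup_le hT ?_) fun f hf => ?_
  · rintro _ ⟨f, hf, rfl⟩
    exact add_mem hf (hT ⟨f, hf, rfl⟩)
  · exact Submodule.mem_sup.mpr ⟨T (-f), ⟨-f, neg_mem hf, rfl⟩, f + T f, ⟨f, hf, rfl⟩, by simp⟩

lemma Submodule.map_inf_map_id_add_eq_bot (hT : ∀ v ∈ V, T (T v) = -T v) :
    V.map T ⊓ V.map (LinearMap.id + T) = ⊥ := by
  rw [eq_bot_iff]
  rintro _ ⟨⟨f, hf, rfl⟩, ⟨g, hg, hgf⟩⟩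
  have hTg : T ((LinearMap.id + T : M →ₗ[R] M) g) = 0 := by
    rw [LinearMap.add_apply, map_add, LinearMap.id_apply, hT g hg, add_neg_cancel]
  rw [Submodule.mem_bot, ← neg_eq_zero, ← hT f hf, ← hgf, hTg]

end Projection

section HeckeSquare

variable {F : Type} [Field F] [Fintype F] {k : Type} [Field k] {ψ : Fˣ →* kˣ} {f : GL2 F → k}

lemma heckeT_apply_one (f : GL2 F → k) : heckeT F k f 1 = ∑ c, f (wElt F * uElt F c) := by
  simp [heckeT_apply]

lemma heckeT_apply_wElt_mul_uElt (hf : f ∈ Ind F k (ψ.comp mulMonoidHom)) (m : F) :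
    heckeT F k f (wElt F * uElt F m) =
      f 1 + ∑ c, f (wElt F * uElt F c) - f (wElt F * uElt F m) := by
  classical
  have h0 : f (wElt F * uElt F 0 * (wElt F * uElt F m)) = f 1 := by
    rw [uElt_zero, mul_one, ← mul_assoc, wElt_mul_wElt, hf, uElt_eq_bElt,
      apply_bElt_of_mem_Ind hf]
    simp
  have hunit : ∀ c : Fˣ, f (wElt F * uElt F c * (wElt F * uElt F m)) =
      f (wElt F * uElt F (m - (c : F)⁻¹)) := by
    intro c
    rw [← mul_assoc, wElt_mul_uElt_mul_wElt, mul_assoc, mul_assoc, uElt_mul_uElt, hf]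
    simp [sub_eq_neg_add]
  -- `c ↦ m - c⁻¹` permutes `F` since `0⁻¹ = 0`; the junk term at `c = 0` is subtracted back.
  have hsum : ∑ c, f (wElt F * uElt F (m - c⁻¹)) = ∑ c, f (wElt F * uElt F c) :=
    ((Equiv.inv F).trans (Equiv.subLeft m)).sum_comp fun c => f (wElt F * uElt F c)
  rw [heckeT_apply, ← Finset.add_sum_erase _ _ (Finset.mem_univ 0), h0,
    Finset.sum_congr rfl fun c hc => by simpa using hunit (Units.mk0 c (Finset.ne_of_mem_erase hc)),
    Finset.sum_erase_eq_sub (Finset.mem_univ 0), hsum]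
  simp
  ring

lemma add_heckeT_eq_smul_detChar (hf : f ∈ Ind F k (ψ.comp mulMonoidHom)) :
    f + heckeT F k f = (f 1 + ∑ c, f (wElt F * uElt F c)) • detChar ψ := by
  refine Ind_ext (add_mem hf (heckeT_mem_Ind_comp_mulMonoidHom ψ hf))
    (Submodule.smul_mem _ _ (detChar_mem_Ind ψ)) ?_ fun m => ?_
  · simp [heckeT_apply_one]
  · simp [heckeT_apply_wElt_mul_uElt hf]

variable (hq : (Fintype.card F : k) = 0)
include hq

lemma heckeT_heckeT (hf : f ∈ Ind F k (ψ.comp mulMonoidHom)) :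
    heckeT F k (heckeT F k f) = -heckeT F k f := by
  have h := congrArg (heckeT F k) (add_heckeT_eq_smul_detChar hf)
  rw [map_add, map_smul, heckeT_detChar, hq, zero_smul, smul_zero] at h
  exact eq_neg_of_add_eq_zero_right h

lemma map_id_add_heckeT_Ind :
    (Ind F k (ψ.comp mulMonoidHom)).map (LinearMap.id + heckeT F k) = k ∙ detChar ψ := by
  refine le_antisymm ?_ ?_
  · rintro _ ⟨f, hf, rfl⟩
    rw [LinearMap.add_apply, LinearMap.id_apply, add_heckeT_eq_smul_detChar hf]
    exact Submodule.smul_mem _ _ (Submodule.mem_span_singleton_self _)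
  · rw [Submodule.span_le, Set.singleton_subset_iff]
    exact ⟨detChar ψ, detChar_mem_Ind ψ, by simp [heckeT_detChar, hq]⟩

end HeckeSquare

section Dimension

variable {F : Type} [Field F] {k : Type}

-- `x ∈ B · wElt F · uElt F m` exactly when `x₁₀ ≠ 0` and `m = x₁₁ / x₁₀`.
open scoped Classical in
noncomputable def bruhatExtend (a : k) (φ : F → k) (x : GL2 F) : k :=
  if (x : Matrix (Fin 2) (Fin 2) F) 1 0 = 0 then a
  else φ ((x : Matrix (Fin 2) (Fin 2) F) 1 1 / (x : Matrix (Fin 2) (Fin 2) F) 1 0)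

lemma coe_bElt_mul_apply_one (a d : Fˣ) (e : F) (g : GL2 F) (j : Fin 2) :
    ((bElt F a d e * g : GL2 F) : Matrix (Fin 2) (Fin 2) F) 1 j =
      d * (g : Matrix (Fin 2) (Fin 2) F) 1 j := by
  simp [Matrix.mul_apply, Fin.sum_univ_two]

lemma bruhatExtend_mem_Ind_one [Field k] (a : k) (φ : F → k) :
    bruhatExtend a φ ∈ Ind F k 1 := by
  intro _ d e g
  unfold bruhatExtend
  rw [coe_bElt_mul_apply_one, coe_bElt_mul_apply_one, mul_eq_zero, or_iff_right d.ne_zero,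
    mul_div_mul_left _ _ d.ne_zero, MonoidHom.one_apply, Units.val_one, one_mul]

@[simp]
lemma bruhatExtend_one (a : k) (φ : F → k) : bruhatExtend a φ 1 = a := by
  simp [bruhatExtend]

@[simp]
lemma bruhatExtend_wElt_mul_uElt (a : k) (φ : F → k) (c : F) :
    bruhatExtend a φ (wElt F * uElt F c) = φ c := by
  simp [bruhatExtend, Matrix.mul_apply, Fin.sum_univ_two]

lemma finrank_Ind [Field k] [Fintype F] (ψ : Fˣ →* kˣ) :
    Module.finrank k (Ind F k (ψ.comp mulMonoidHom)) = Fintype.card F + 1 := by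
  let ev : Ind F k (ψ.comp mulMonoidHom) →ₗ[k] k × (F → k) :=
    ((LinearMap.proj 1).prod
      (LinearMap.pi fun c => LinearMap.proj (wElt F * uElt F c))).domRestrict _
  have hinj : Function.Injective ev := fun f g h =>
    Subtype.ext (Ind_ext f.2 g.2 (congrArg Prod.fst h) (congrFun (congrArg Prod.snd h)))
  have hsurj : Function.Surjective ev := by
    rintro ⟨a, φ⟩
    have hmem := detChar_mul_mem_Ind ψ (bruhatExtend_mem_Ind_one a φ)
    rw [one_mul (ψ.comp mulMonoidHom)] at hmem
    exact ⟨⟨_, hmem⟩, by ext <;> simp [ev]⟩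
  rw [(LinearEquiv.ofBijective ev ⟨hinj, hsurj⟩).finrank_eq, Module.finrank_prod,
    Module.finrank_self, Module.finrank_fintype_fun_eq_card, add_comm]

end Dimension

variable (F : Type) [Field F] [Fintype F] (k : Type) [Field k]

theorem stmt_1 (p n : ℕ) (hn : 1 ≤ n) (hF : Fintype.card F = p ^ n)
    [CharP k p]
    (χ' : Fˣ →* kˣ) :
    -- `Im T_{n_s}` and `Im (1 + T_{n_s})` are submodules of `Ind_B^Γ χ` …
    Submodule.map (heckeT F k) (Ind F k (χ'.comp mulMonoidHom)) ≤
        Ind F k (χ'.comp mulMonoidHom) ∧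
    Submodule.map (LinearMap.id + heckeT F k) (Ind F k (χ'.comp mulMonoidHom)) ≤
        Ind F k (χ'.comp mulMonoidHom) ∧
    -- … and `Ind_B^Γ χ` is their internal direct sum
    Submodule.map (heckeT F k) (Ind F k (χ'.comp mulMonoidHom)) ⊓
        Submodule.map (LinearMap.id + heckeT F k) (Ind F k (χ'.comp mulMonoidHom)) = ⊥ ∧
    Submodule.map (heckeT F k) (Ind F k (χ'.comp mulMonoidHom)) ⊔
        Submodule.map (LinearMap.id + heckeT F k) (Ind F k (χ'.comp mulMonoidHom)) =
      Ind F k (χ'.comp mulMonoidHom) ∧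
    -- `Im (1 + T_{n_s})` is the line spanned by `g ↦ χ'(det g)`
    Submodule.map (LinearMap.id + heckeT F k) (Ind F k (χ'.comp mulMonoidHom)) =
      Submodule.span k {fun g : GL2 F => (χ' (Matrix.GeneralLinearGroup.det g) : k)} ∧
    -- on which `Γ` acts through the character `χ' ∘ det`
    (∀ g : GL2 F,
      rt F k g (fun x : GL2 F => (χ' (Matrix.GeneralLinearGroup.det x) : k)) =
        (χ' (Matrix.GeneralLinearGroup.det g) : k) •
          fun x : GL2 F => (χ' (Matrix.GeneralLinearGroup.det x) : k)) ∧
    -- consequently `Im T_{n_s}` has dimension `q`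
    Module.finrank k ↥(Submodule.map (heckeT F k) (Ind F k (χ'.comp mulMonoidHom))) =
      Fintype.card F ∧
    -- and `Im T_{n_s} ≅ St ⊗ (χ' ∘ det)` as `k[Γ]`-modules
    (∃ e : (GL2 F → k) →ₗ[k] (GL2 F → k),
      (∀ (g : GL2 F), ∀ f ∈ Submodule.map (heckeT F k) (Ind F k (χ'.comp mulMonoidHom)),
        e (rt F k g f) = (χ' (Matrix.GeneralLinearGroup.det g) : k) • rt F k g (e f)) ∧
      (∀ f ∈ Submodule.map (heckeT F k) (Ind F k (χ'.comp mulMonoidHom)), e f = 0 → f = 0) ∧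
      Submodule.map e (Submodule.map (heckeT F k) (Ind F k (χ'.comp mulMonoidHom))) =
        Submodule.map (heckeT F k) (Ind F k 1)) := by
  have hq : (Fintype.card F : k) = 0 := by
    rw [hF, Nat.cast_pow, CharP.cast_eq_zero, zero_pow (by omega)]
  have hT : (Ind F k (χ'.comp mulMonoidHom)).map (heckeT F k) ≤ Ind F k (χ'.comp mulMonoidHom) := by
    rintro _ ⟨f, hf, rfl⟩
    exact heckeT_mem_Ind_comp_mulMonoidHom χ' hf
  have hsup := Submodule.map_sup_map_id_add_eq hT
  have hinf := Submodule.map_inf_map_id_add_eq_bot (V := Ind F k (χ'.comp mulMonoidHom))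
    fun _ => heckeT_heckeT hq
  have hline := map_id_add_heckeT_Ind (ψ := χ') hq
  refine ⟨hT, le_sup_right.trans hsup.le, hinf, hsup, hline, rt_detChar χ', ?_,
    LinearMap.mulLeft k (detChar χ'⁻¹), fun g f _ => ?_,
    fun f _ h => mulLeft_detChar_injective _ (h.trans (map_zero _).symm), ?_⟩
  · have h := Submodule.finrank_sup_add_finrank_inf_eq
      ((Ind F k (χ'.comp mulMonoidHom)).map (heckeT F k))
      ((Ind F k (χ'.comp mulMonoidHom)).map (LinearMap.id + heckeT F k))
    rw [hsup, hinf, hline, finrank_bot, finrank_span_singleton (detChar_ne_zero χ'),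
      finrank_Ind] at h
    omega
  · simp [rt_detChar_mul, smul_smul]
  · rw [← Submodule.map_comp, ← heckeT_comp_mulLeft_detChar, Submodule.map_comp,
      map_mulLeft_detChar_Ind, MonoidHom.inv_comp, mul_inv_cancel (G := (Fˣ × Fˣ) →* kˣ)]
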